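/- The operations T_Min_p, S_Min_p and the standard negator N_s form a De Morgan triplet: T_Min_p(x,y) = N_s(S_Min_p(N_s(x), N_s(y))) and S_Min_p(x,y) = N_s(T_Min_p(N_s(x), N_s(y))) for all x, y in L^I. -/

import Mathlib

def LI : Type := {p : ℝ × ℝ // 0 ≤ p.1 ∧ p.1 ≤ p.2 ∧ p.2 ≤ 1}

noncomputable def mid (x : LI) : ℝ := (x.val.1 + x.val.2) / 2

noncomputable def width (x : LI) : ℝ := x.val.2 - x.val.1

/-- `T_Min_p`: smaller midpoint wins; on equal midpoints the narrower interval wins. -/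
noncomputable def TMinp (x y : LI) : LI :=
  if mid x = mid y then (if width x ≤ width y then x else y)
  else (if mid x ≤ mid y then x else y)

/-- `S_Min_p`: larger midpoint wins; on equal midpoints the narrower interval wins. -/
noncomputable def SMinp (x y : LI) : LI :=
  if mid x = mid y then (if width x ≤ width y then x else y)
  else (if mid x ≤ mid y then y else x)

/-- The standard negator `N_s`. -/
noncomputable def Ns (x : LI) : LI :=
  ⟨(1 - x.val.2, 1 - x.val.1), by
    obtain ⟨h1, h2, h3⟩ := x.property
    refine ⟨by simp; linarith, by simp; linarith, by simp; linarith⟩⟩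

lemma Ns_involutive : Function.Involutive Ns := fun x =>
  Subtype.ext (by simp [Ns])

lemma mid_Ns (x : LI) : mid (Ns x) = 1 - mid x := by
  simp only [mid, Ns]
  ring

lemma width_Ns (x : LI) : width (Ns x) = width x := by
  simp only [width, Ns]
  ring

lemma mid_Ns_eq_mid_Ns_iff {x y : LI} : mid (Ns x) = mid (Ns y) ↔ mid x = mid y := by
  rw [mid_Ns, mid_Ns, sub_right_inj]

lemma mid_Ns_le_mid_Ns_iff {x y : LI} : mid (Ns x) ≤ mid (Ns y) ↔ mid y ≤ mid x := by
  rw [mid_Ns, mid_Ns, sub_le_sub_iff_left]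

/-- Negation reverses the midpoint order and preserves widths, so it turns `S_Min_p` into
`T_Min_p`; the tie-breaking rule on widths is the same for both. -/
lemma Ns_SMinp (x y : LI) : Ns (SMinp x y) = TMinp (Ns x) (Ns y) := by
  unfold SMinp TMinp
  simp only [mid_Ns_eq_mid_Ns_iff, mid_Ns_le_mid_Ns_iff, width_Ns]
  by_cases hxy : mid x = mid y
  · simp only [hxy, if_true, apply_ite Ns]
  · rcases lt_or_gt_of_ne hxy with hlt | hgt
    · simp [hxy, hlt.le, hlt.not_ge]
    · simp [hxy, hgt.le, hgt.not_ge]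

theorem stmt_17 (x y : LI) :
    TMinp x y = Ns (SMinp (Ns x) (Ns y)) ∧ SMinp x y = Ns (TMinp (Ns x) (Ns y)) := by
  constructor
  · rw [Ns_SMinp, Ns_involutive x, Ns_involutive y]
  · rw [← Ns_SMinp, Ns_involutive]
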